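/- Let r > 0 and let f = (f₁,…,f_p) : B^n(0,r) → ℝ^p be a C^∞ map whose last component is f_p(x) = (1/2)∑_{i=1}^n x_i² + a for some a ∈ ℝ. If g = (g₁,…,g_p) : B^n(0,r) → ℝ^p is C^∞ and satisfies ‖∇f_p(x) − ∇g_p(x)‖ < r/2 for all x ∈ B^n(0,r), then g_p (and hence g) has a critical point x₀ in B^n(0,r), i.e., ∇g_p(x₀) = 0. -/

import Mathlib

open Metric InnerProductSpace Set Filter Topology

private lemma aux_hasGradientAt_quad {n : ℕ} (a : ℝ) (x : EuclideanSpace ℝ (Fin n)) :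
    HasGradientAt (fun y : EuclideanSpace ℝ (Fin n) => (1 / 2 : ℝ) * ∑ i, (y i) ^ 2 + a) x x := by
  have hsum : ∀ y : EuclideanSpace ℝ (Fin n), ∑ i, (y i) ^ 2 = ‖y‖ ^ 2 := by
    intro y
    rw [EuclideanSpace.norm_eq, Real.sq_sqrt (by positivity)]
    simp [Real.norm_eq_abs, sq_abs]
  have h1 : HasFDerivAt (fun y : EuclideanSpace ℝ (Fin n) => (1 / 2 : ℝ) * ‖y‖ ^ 2 + a)
      ((1 / 2 : ℝ) • (2 • (innerSL ℝ x).comp (ContinuousLinearMap.id ℝ (EuclideanSpace ℝ (Fin n))))) x :=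
    ((hasFDerivAt_id x).norm_sq.const_mul (1 / 2)).add_const a
  have h2 : HasFDerivAt (fun y : EuclideanSpace ℝ (Fin n) => (1 / 2 : ℝ) * ∑ i, (y i) ^ 2 + a)
      ((1 / 2 : ℝ) • (2 • (innerSL ℝ x).comp (ContinuousLinearMap.id ℝ (EuclideanSpace ℝ (Fin n))))) x := by
    simpa only [hsum] using h1
  have h3 : ((1 / 2 : ℝ) • (2 • (innerSL ℝ x).comp (ContinuousLinearMap.id ℝ (EuclideanSpace ℝ (Fin n)))))
      = toDual ℝ (EuclideanSpace ℝ (Fin n)) x := by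
    ext y
    simp [toDual_apply_apply, two_smul]
    ring
  rw [h3] at h2
  simpa using h2.hasGradientAt

theorem exists_critical_point_of_gradient_close
    {n p : ℕ} (r : ℝ) (hr : 0 < r) (a : ℝ)
    (f g : EuclideanSpace ℝ (Fin n) → EuclideanSpace ℝ (Fin (p + 1)))
    (hf : ContDiffOn ℝ (⊤ : ℕ∞) f (ball (0 : EuclideanSpace ℝ (Fin n)) r))
    (hg : ContDiffOn ℝ (⊤ : ℕ∞) g (ball (0 : EuclideanSpace ℝ (Fin n)) r))
    (hfp : ∀ x ∈ ball (0 : EuclideanSpace ℝ (Fin n)) r,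
      f x (Fin.last p) = (1 / 2) * ∑ i, (x i) ^ 2 + a)
    (hclose : ∀ x ∈ ball (0 : EuclideanSpace ℝ (Fin n)) r,
      ‖gradient (fun y => f y (Fin.last p)) x - gradient (fun y => g y (Fin.last p)) x‖ < r / 2) :
    ∃ x₀ ∈ ball (0 : EuclideanSpace ℝ (Fin n)) r,
      gradient (fun y => g y (Fin.last p)) x₀ = 0 := by
  set gp : EuclideanSpace ℝ (Fin n) → ℝ := fun y => g y (Fin.last p) with hgp_def
  have hgp : ContDiffOn ℝ (⊤ : ℕ∞) gp (ball 0 r) := by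
    exact (ContinuousLinearMap.contDiff
      (EuclideanSpace.proj (𝕜 := ℝ) (Fin.last p))).comp_contDiffOn hg
  have hgradf : ∀ x ∈ ball (0 : EuclideanSpace ℝ (Fin n)) r,
      gradient (fun y => f y (Fin.last p)) x = x := by
    intro x hx
    have hev : (fun y => f y (Fin.last p)) =ᶠ[𝓝 x]
        (fun y : EuclideanSpace ℝ (Fin n) => (1 / 2 : ℝ) * ∑ i, (y i) ^ 2 + a) :=
      eventually_of_mem (isOpen_ball.mem_nhds hx) hfp
    have h2 : HasFDerivAt (fun y => f y (Fin.last p))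
        (toDual ℝ (EuclideanSpace ℝ (Fin n)) x) x :=
      ((aux_hasGradientAt_quad a x).hasFDerivAt).congr_of_eventuallyEq hev
    have h3 := h2.hasGradientAt
    simp only [LinearIsometryEquiv.symm_apply_apply] at h3
    exact h3.gradient
  have hclose' : ∀ x ∈ ball (0 : EuclideanSpace ℝ (Fin n)) r, ‖x - gradient gp x‖ < r / 2 := by
    intro x hx
    have := hclose x hx
    rwa [hgradf x hx] at this
  set ρ : ℝ := 3 / 4 * r with hρ
  have hρpos : 0 < ρ := by positivity
  have hKball : closedBall (0 : EuclideanSpace ℝ (Fin n)) ρ ⊆ ball 0 r :=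
    closedBall_subset_ball (by rw [hρ]; linarith)
  obtain ⟨x₀, hx₀K, hmin⟩ :=
    (isCompact_closedBall (0 : EuclideanSpace ℝ (Fin n)) ρ).exists_isMinOn
      ⟨0, mem_closedBall_self hρpos.le⟩ ((hgp.continuousOn).mono hKball)
  have hx₀ball : x₀ ∈ ball (0 : EuclideanSpace ℝ (Fin n)) r := hKball hx₀K
  refine ⟨x₀, hx₀ball, ?_⟩
  have hdiff : DifferentiableAt ℝ gp x₀ :=
    (hgp.contDiffAt (isOpen_ball.mem_nhds hx₀ball)).differentiableAt (by simp)
  by_cases hb : ‖x₀‖ < ρ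
  · have hnhds : closedBall (0 : EuclideanSpace ℝ (Fin n)) ρ ∈ 𝓝 x₀ :=
      mem_nhds_iff.mpr ⟨ball 0 ρ, ball_subset_closedBall, isOpen_ball, mem_ball_zero_iff.mpr hb⟩
    have h0 : fderiv ℝ gp x₀ = 0 := (hmin.isLocalMin hnhds).fderiv_eq_zero
    show gradient gp x₀ = 0
    unfold gradient
    rw [h0, map_zero]
  · exfalso
    have hx₀ρ : ‖x₀‖ = ρ := le_antisymm (mem_closedBall_zero_iff.mp hx₀K) (not_lt.mp hb)
    set v := gradient gp x₀ with hv_def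
    have hvx : 0 < ⟪v, x₀⟫_ℝ := by
      have h1 : ‖x₀ - v‖ < r / 2 := hclose' x₀ hx₀ball
      have h2 : ⟪x₀ - v, x₀⟫_ℝ ≤ ‖x₀ - v‖ * ‖x₀‖ := real_inner_le_norm _ _
      have h3 : ⟪v, x₀⟫_ℝ = ⟪x₀, x₀⟫_ℝ - ⟪x₀ - v, x₀⟫_ℝ := by
        rw [inner_sub_left]; ring
      have h4 : ⟪x₀, x₀⟫_ℝ = ρ ^ 2 := by
        rw [real_inner_self_eq_norm_sq, hx₀ρ]
      have h5 : ‖x₀ - v‖ * ‖x₀‖ < (r / 2) * ρ := by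
        rw [hx₀ρ]; exact mul_lt_mul_of_pos_right h1 hρpos
      have : (r / 2) * ρ < ρ ^ 2 := by rw [hρ]; nlinarith
      linarith
    have hc : HasDerivAt (fun t : ℝ => (1 - t) • x₀) ((-1 : ℝ) • x₀) 0 := by
      have h : HasDerivAt (fun t : ℝ => (1 : ℝ) - t) (-1) 0 := by
        simpa using (hasDerivAt_id (0 : ℝ)).const_sub 1
      exact h.smul_const x₀
    have hF : HasFDerivAt gp (toDual ℝ (EuclideanSpace ℝ (Fin n)) v) x₀ :=
      hdiff.hasGradientAt.hasFDerivAt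
    have hφ : HasDerivAt (fun t : ℝ => gp ((1 - t) • x₀)) (-⟪v, x₀⟫_ℝ) 0 := by
      have hF' : HasFDerivAt gp (toDual ℝ (EuclideanSpace ℝ (Fin n)) v) ((1 - (0 : ℝ)) • x₀) := by
        simpa using hF
      have h := hF'.comp_hasDerivAt 0 hc
      simpa [Function.comp_def, toDual_apply_apply, inner_smul_right] using h
    have hslope := hasDerivAt_iff_tendsto_slope.mp hφ
    have hslope' : Tendsto (slope (fun t : ℝ => gp ((1 - t) • x₀)) 0) (𝓝[>] (0 : ℝ))
        (𝓝 (-⟪v, x₀⟫_ℝ)) :=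
      hslope.mono_left (nhdsWithin_mono _ (fun t ht => ne_of_gt ht))
    have hev : ∀ᶠ t in 𝓝[>] (0 : ℝ), slope (fun t : ℝ => gp ((1 - t) • x₀)) 0 t < 0 :=
      hslope'.eventually_lt_const (by linarith)
    have hev2 : ∀ᶠ t in 𝓝[>] (0 : ℝ), t ∈ Ioo (0 : ℝ) 1 :=
      Ioo_mem_nhdsGT zero_lt_one
    obtain ⟨t, hts, ht01⟩ := (hev.and hev2).exists
    obtain ⟨ht0, ht1⟩ := ht01
    have hlt : gp ((1 - t) • x₀) < gp x₀ := by
      have h0 : (fun t : ℝ => gp ((1 - t) • x₀)) 0 = gp x₀ := by norm_num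
      rw [slope_def_field] at hts
      have := div_neg_iff.mp (by simpa [h0] using hts)
      rcases this with ⟨h1, h2⟩ | ⟨h1, h2⟩
      · linarith
      · linarith
    have hmem : (1 - t) • x₀ ∈ closedBall (0 : EuclideanSpace ℝ (Fin n)) ρ := by
      rw [mem_closedBall_zero_iff, norm_smul, hx₀ρ, Real.norm_eq_abs,
        abs_of_pos (by linarith)]
      nlinarith
    exact absurd (hmin hmem) (not_le.mpr hlt)
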